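/- arXiv:1206.0277 — 2 statements merged into one kernel-verified Lean document; each statement's English description precedes it below -/
import Mathlib

section
/- Let N ≥ 4 be a natural number and let θ : Fin N → ℝ be arbitrary. Then there exist pairwise distinct indices i, j, l in Fin N such that cos(2(θ_i − θ_j)) + cos(2(θ_j − θ_l)) + cos(2(θ_i − θ_l)) ≥ 1 + 2·cos(4π/N). -/
/-!
Reduce the doubled angles `2 θᵢ` modulo `2π` and sort them around the circle. The `N` gaps
between cyclically consecutive points add up to `2π`, so summing pairs of adjacent gaps shows
that some two consecutive gaps `a, b` satisfy `a + b ≤ 4π / N`. For the three points bounding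
them the cost is `cos a + cos b + cos (a + b) ≥ 1 + 2 cos (a + b) ≥ 1 + 2 cos (4π / N)`.
-/
open Real Finset AddCommGroup Fin.NatCast

theorem Function.Periodic.eq_of_modEq {α β : Type*} [AddCommGroup α] {f : α → β} {p a b : α}
    (hf : Function.Periodic f p) (h : a ≡ b [PMOD p]) : f a = f b := by
  obtain ⟨z, rfl⟩ := modEq_iff_eq_add_zsmul.mp h
  exact (hf.zsmul z a).symm

lemma Real.cos_sub_eq_of_modEq {x y a : ℝ} (h : y ≡ x + a [PMOD 2 * π]) : cos (x - y) = cos a := by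
  rw [cos_periodic.eq_of_modEq (h.sub_left x), sub_add_cancel_left, cos_neg]

lemma Real.one_add_cos_add_le_cos_add_cos {a b : ℝ} (ha : 0 ≤ a) (hb : 0 ≤ b) (hab : a + b ≤ π) :
    1 + cos (a + b) ≤ cos a + cos b := by
  have hc : 0 ≤ cos ((a + b) / 2) := cos_nonneg_of_mem_Icc ⟨by linarith [pi_pos], by linarith⟩
  have hle : cos ((a + b) / 2) ≤ cos ((a - b) / 2) := by
    rw [← cos_abs ((a - b) / 2)]
    exact cos_le_cos_of_nonneg_of_le_pi (abs_nonneg _) (by linarith)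
      (abs_le.mpr ⟨by linarith, by linarith⟩)
  calc 1 + cos (a + b) = 2 * cos ((a + b) / 2) ^ 2 := by
        rw [cos_sq, mul_div_cancel₀ _ two_ne_zero]; ring
    _ ≤ 2 * cos ((a + b) / 2) * cos ((a - b) / 2) := by nlinarith
    _ = cos a + cos b := (cos_add_cos a b).symm

lemma Fin.natCast_ne_natCast_of_lt {N : ℕ} [NeZero N] {a b : ℕ} (hab : a < b) (hba : b < a + N) :
    (a : Fin N) ≠ (b : Fin N) := by
  intro h
  have hd : (b - a) % N = 0 :=
    Nat.sub_mod_eq_zero_of_mod_eq (by simpa [Fin.ext_iff, Fin.val_natCast] using h.symm)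
  rw [Nat.mod_eq_of_lt (by omega)] at hd
  omega

section CyclicLift

variable {N : ℕ} [NeZero N] {p : ℝ}

/-- For `y` sorted with values in `[0, p)`, the points `y` listed in cyclic order forever,
unwinding the circle of circumference `p` onto `ℝ`. -/
def cyclicLift (p : ℝ) (y : Fin N → ℝ) (n : ℕ) : ℝ := y n + (n / N : ℕ) * p

lemma cyclicLift_add_self (y : Fin N → ℝ) (n : ℕ) :
    cyclicLift p y (n + N) = cyclicLift p y n + p := by
  simp only [cyclicLift, Nat.cast_add, Fin.natCast_self, add_zero,
    Nat.add_div_right _ (NeZero.pos N), Nat.cast_one]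
  ring

lemma cyclicLift_modEq (y : Fin N → ℝ) (n : ℕ) : cyclicLift p y n ≡ y n [PMOD p] := by
  rw [cyclicLift, ← nsmul_eq_mul]
  exact add_nsmul_modEq _

lemma monotone_cyclicLift {y : Fin N → ℝ} (hy : Monotone y) (hmem : ∀ i, y i ∈ Set.Ico 0 p) :
    Monotone (cyclicLift p y) := by
  intro n m hnm
  rcases (Nat.div_le_div_right hnm : n / N ≤ m / N).lt_or_eq with hq | hq
  · have hp : 0 < p := (hmem 0).1.trans_lt (hmem 0).2
    calc cyclicLift p y n = y n + (n / N : ℕ) * p := rfl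
      _ ≤ ((n / N : ℕ) + 1) * p := by linarith [(hmem n).2]
      _ ≤ (m / N : ℕ) * p := by gcongr; exact_mod_cast hq
      _ ≤ cyclicLift p y m := le_add_of_nonneg_left (hmem m).1
  · have hr : n % N ≤ m % N := by
      have hn := Nat.div_add_mod n N
      have hm := Nat.div_add_mod m N
      rw [hq] at hn
      omega
    unfold cyclicLift
    rw [hq]
    gcongr
    exact hy (by simpa [Fin.le_def, Fin.val_natCast] using hr)

lemma sum_cyclicLift_add_two_sub (y : Fin N → ℝ) :
    ∑ k ∈ range N, (cyclicLift p y (k + 2) - cyclicLift p y k) = 2 * p := by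
  have hsplit : ∀ k, cyclicLift p y (k + 2) - cyclicLift p y k =
      (cyclicLift p y (k + 1 + 1) - cyclicLift p y (k + 1)) +
        (cyclicLift p y (k + 1) - cyclicLift p y k) := fun k => by ring
  rw [sum_congr rfl fun k _ => hsplit k, sum_add_distrib,
    sum_range_sub (fun k => cyclicLift p y (k + 1)), sum_range_sub, add_comm N 1,
    cyclicLift_add_self]
  have h₀ := cyclicLift_add_self (p := p) y 0
  rw [zero_add] at h₀
  rw [h₀, zero_add]
  ring

lemma exists_cyclicLift_add_two_sub_le (y : Fin N → ℝ) :
    ∃ k, cyclicLift p y (k + 2) - cyclicLift p y k ≤ 2 * p / N := by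
  obtain ⟨k, -, hk⟩ := exists_le_of_sum_le (s := range N)
    (f := fun k => cyclicLift p y (k + 2) - cyclicLift p y k) (g := fun _ => 2 * p / N)
    (nonempty_range_iff.mpr (NeZero.ne N)) (by
      rw [sum_cyclicLift_add_two_sub, sum_const, card_range, nsmul_eq_mul,
        mul_div_cancel₀ (2 * p) (Nat.cast_ne_zero.mpr (NeZero.ne N))])
  exact ⟨k, hk⟩

end CyclicLift

theorem exists_consecutive_arcs_le {N : ℕ} {p : ℝ} (hp : 0 < p) (hN : 3 ≤ N) (x : Fin N → ℝ) :
    ∃ i j l : Fin N, i ≠ j ∧ i ≠ l ∧ j ≠ l ∧ ∃ a b : ℝ, 0 ≤ a ∧ 0 ≤ b ∧ a + b ≤ 2 * p / N ∧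
      x j ≡ x i + a [PMOD p] ∧ x l ≡ x j + b [PMOD p] := by
  have : NeZero N := ⟨by omega⟩
  set y : Fin N → ℝ := fun i => toIcoMod hp 0 (x i)
  set σ := Tuple.sort y
  set F := cyclicLift p (y ∘ σ)
  have hF : Monotone F := monotone_cyclicLift (Tuple.monotone_sort y) fun i => by
    simpa using toIcoMod_mem_Ico hp 0 (x (σ i))
  have hFx (n : ℕ) : F n ≡ x (σ n) [PMOD p] :=
    (cyclicLift_modEq _ n).trans ((toIcoMod_inj hp).mp (toIcoMod_toIcoMod hp 0 0 (x (σ n))))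
  have hstep (m n : ℕ) : x (σ n) ≡ x (σ m) + (F n - F m) [PMOD p] :=
    calc x (σ n) ≡ F n [PMOD p] := (hFx n).symm
      _ = F m + (F n - F m) := by ring
      _ ≡ x (σ m) + (F n - F m) [PMOD p] := (hFx m).add_right _
  obtain ⟨k, hk⟩ := exists_cyclicLift_add_two_sub_le (p := p) (y ∘ σ)
  refine ⟨σ k, σ (k + 1 : ℕ), σ (k + 2 : ℕ), ?_, ?_, ?_, F (k + 1) - F k, F (k + 2) - F (k + 1),
    sub_nonneg.mpr (hF (by omega)), sub_nonneg.mpr (hF (by omega)), by linarith,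
    hstep _ _, hstep _ _⟩ <;>
  exact σ.injective.ne (Fin.natCast_ne_natCast_of_lt (by omega) (by omega))

theorem stmt_7 (N : ℕ) (hN : 4 ≤ N) (θ : Fin N → ℝ) :
    ∃ i j l : Fin N, i ≠ j ∧ i ≠ l ∧ j ≠ l ∧
      Real.cos (2 * (θ i - θ j)) + Real.cos (2 * (θ j - θ l)) +
        Real.cos (2 * (θ i - θ l)) ≥ 1 + 2 * Real.cos (4 * Real.pi / N) := by
  obtain ⟨i, j, l, hij, hil, hjl, a, b, ha, hb, hab, hj, hl⟩ :=
    exists_consecutive_arcs_le two_pi_pos (by omega) (2 * θ ·)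
  have hab' : a + b ≤ 4 * π / N := by convert hab using 2; ring
  have hπ : 4 * π / N ≤ π := by
    rw [div_le_iff₀' (by positivity)]
    exact mul_le_mul_of_nonneg_right (by exact_mod_cast hN) pi_pos.le
  have hl' : 2 * θ l ≡ 2 * θ i + (a + b) [PMOD 2 * π] := by
    simpa only [add_assoc] using hl.trans (hj.add_right b)
  refine ⟨i, j, l, hij, hil, hjl, ?_⟩
  rw [mul_sub, mul_sub, mul_sub, cos_sub_eq_of_modEq hj, cos_sub_eq_of_modEq hl,
    cos_sub_eq_of_modEq hl']
  linarith [one_add_cos_add_le_cos_add_cos ha hb (hab'.trans hπ),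
    cos_le_cos_of_nonneg_of_le_pi (by positivity) hπ hab']
end

section
/- Let N ≥ 9 be an odd natural number and define θ : Fin N → ℝ by θ_i = 2π·i/(N+1). Then for all pairwise distinct indices i, j, l in Fin N, cos(2(θ_i − θ_j)) + cos(2(θ_j − θ_l)) + cos(2(θ_i − θ_l)) ≤ 1 + 2·cos(4π/(N+1)), and this bound is attained by some triple of distinct indices. -/
/-!
Write `N + 1 = 2M`, so that `2(θ_i - θ_j) = 2π(i - j)/M` and the target bound is
`1 + 2 cos(2π/M)`. The cosine of `2πk/M` is at most `cos(2π/M)` unless `M ∣ k`, and for distinct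
indices `i, j, l < 2M` the modulus `M` cannot divide two (hence all three) of the differences
`i - j`, `j - l`, `i - l`: three points of `[0, 2M)` cannot be pairwise `M` apart. So two of the
three cosines are at most `cos(2π/M)` and the third is at most `1`. The triple `(0, M, M - 1)`,
with differences `-M, 1, 1 - M`, attains the bound.
-/

open Real

theorem cos_two_pi_int_div_le (M : ℕ) {k : ℤ} (hk : ¬ (M : ℤ) ∣ k) :
    cos (2 * π * k / M) ≤ cos (2 * π / M) := by
  rcases M.eq_zero_or_pos with rfl | hM
  · simp
  have hMR : (0 : ℝ) < M := by exact_mod_cast hM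
  set m : ℤ := round ((k : ℝ) / M)
  have hdist : 1 / (M : ℝ) ≤ |(k : ℝ) / M - m| := by
    have hne : k - m * M ≠ 0 := fun h => hk ⟨m, by linear_combination h⟩
    have hone : (1 : ℝ) ≤ |((k - m * M : ℤ) : ℝ)| := by
      exact_mod_cast Int.one_le_abs hne
    rw [show ((k : ℝ) / M - m) = ((k - m * M : ℤ) : ℝ) / M by push_cast; field_simp,
      abs_div, abs_of_pos hMR]
    gcongr
  calc cos (2 * π * k / M) = cos (2 * π * ((k : ℝ) / M - m)) := by
        rw [mul_sub, mul_comm (2 * π) (m : ℝ), cos_sub_int_mul_two_pi, mul_div_assoc]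
    _ = cos (2 * π * |(k : ℝ) / M - m|) := by rw [← cos_abs, abs_mul, abs_of_pos two_pi_pos]
    _ ≤ cos (2 * π / M) := by
        apply cos_le_cos_of_nonneg_of_le_pi (by positivity)
        · nlinarith [abs_sub_round ((k : ℝ) / M), pi_pos]
        · rw [← mul_one_div]
          gcongr

theorem cos_triple_le (M : ℕ) (x y z : ℤ) (h : ¬ ((M : ℤ) ∣ x - y ∧ (M : ℤ) ∣ y - z)) :
    cos (2 * π * (x - y : ℤ) / M) + cos (2 * π * (y - z : ℤ) / M) +
      cos (2 * π * (x - z : ℤ) / M) ≤ 1 + 2 * cos (2 * π / M) := by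
  by_cases hxy : (M : ℤ) ∣ x - y
  · have hyz : ¬ (M : ℤ) ∣ y - z := fun hyz => h ⟨hxy, hyz⟩
    have hxz : ¬ (M : ℤ) ∣ x - z := fun hxz => hyz <| by
      simpa using (Int.dvd_sub hxz hxy)
    linarith [cos_le_one (2 * π * (x - y : ℤ) / M), cos_two_pi_int_div_le M hyz,
      cos_two_pi_int_div_le M hxz]
  by_cases hyz : (M : ℤ) ∣ y - z
  · have hxz : ¬ (M : ℤ) ∣ x - z := fun hxz => hxy <| by
      simpa using (Int.dvd_sub hxz hyz)
    linarith [cos_le_one (2 * π * (y - z : ℤ) / M), cos_two_pi_int_div_le M hxy,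
      cos_two_pi_int_div_le M hxz]
  linarith [cos_le_one (2 * π * (x - z : ℤ) / M), cos_two_pi_int_div_le M hxy,
    cos_two_pi_int_div_le M hyz]

theorem not_dvd_sub_and_dvd_sub {M i j l : ℕ} (hi : i < 2 * M) (hj : j < 2 * M) (hl : l < 2 * M)
    (hij : i ≠ j) (hjl : j ≠ l) (hil : i ≠ l) :
    ¬ ((M : ℤ) ∣ (i - j : ℤ) ∧ (M : ℤ) ∣ (j - l : ℤ)) := by
  rintro ⟨hdij, hdjl⟩
  have hdil : (M : ℤ) ∣ (i - l : ℤ) := by simpa using dvd_add hdij hdjl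
  have far : ∀ {a b : ℕ}, a ≠ b → (M : ℤ) ∣ (a - b : ℤ) → M ≤ (a - b : ℤ).natAbs := fun hab hd =>
    Int.natAbs_le_of_dvd_ne_zero hd (by omega)
  have hfar_ij := far hij hdij
  have hfar_jl := far hjl hdjl
  have hfar_il := far hil hdil
  omega

theorem cos_triple_attained {M : ℝ} (hM : M ≠ 0) :
    cos (2 * π * (0 - M) / M) + cos (2 * π * (M - (M - 1)) / M) +
      cos (2 * π * (0 - (M - 1)) / M) = 1 + 2 * cos (2 * π / M) := by
  have e1 : 2 * π * (0 - M) / M = -(2 * π) := by field_simp; ring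
  have e2 : 2 * π * (M - (M - 1)) / M = 2 * π / M := by ring
  have e3 : 2 * π * (0 - (M - 1)) / M = 2 * π / M - 2 * π := by field_simp; ring
  rw [e1, e2, e3, cos_neg, cos_two_pi, cos_sub_two_pi]
  ring

theorem stmt_17 (N : ℕ) (hN : 9 ≤ N) (hNodd : Odd N) (θ : Fin N → ℝ)
    (hθ : ∀ i : Fin N, θ i = 2 * Real.pi * (i : ℕ) / (N + 1)) :
    (∀ i j l : Fin N, i ≠ j → i ≠ l → j ≠ l →
      Real.cos (2 * (θ i - θ j)) + Real.cos (2 * (θ j - θ l)) +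
        Real.cos (2 * (θ i - θ l)) ≤ 1 + 2 * Real.cos (4 * Real.pi / (N + 1))) ∧
    (∃ i j l : Fin N, i ≠ j ∧ i ≠ l ∧ j ≠ l ∧
      Real.cos (2 * (θ i - θ j)) + Real.cos (2 * (θ j - θ l)) +
        Real.cos (2 * (θ i - θ l)) = 1 + 2 * Real.cos (4 * Real.pi / (N + 1))) := by
  obtain ⟨M, hNM⟩ : ∃ M : ℕ, N + 1 = 2 * M := ⟨(N + 1) / 2, by rcases hNodd with ⟨m, rfl⟩; omega⟩
  have hNMR : (N : ℝ) + 1 = 2 * M := by exact_mod_cast hNM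
  have hM : (M : ℝ) ≠ 0 := by norm_cast; omega
  have hangle : ∀ i j : Fin N, 2 * (θ i - θ j) = 2 * π * ((i : ℤ) - j : ℤ) / M := by
    intro i j
    rw [hθ, hθ, hNMR]
    push_cast
    field_simp
  have hbound : 4 * π / (N + 1) = 2 * π / M := by
    rw [hNMR]
    field_simp
    ring
  simp only [hangle, hbound]
  refine ⟨fun i j l hij hil hjl => cos_triple_le M i j l ?_, ?_⟩
  · exact not_dvd_sub_and_dvd_sub (by omega) (by omega) (by omega)
      (Fin.val_ne_of_ne hij) (Fin.val_ne_of_ne hjl) (Fin.val_ne_of_ne hil)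
  · refine ⟨⟨0, by omega⟩, ⟨M, by omega⟩, ⟨M - 1, by omega⟩, Fin.ne_of_val_ne (by simp only; omega),
      Fin.ne_of_val_ne (by simp only; omega), Fin.ne_of_val_ne (by simp only; omega), ?_⟩
    have hM1 : ((M - 1 : ℕ) : ℤ) = M - 1 := by omega
    simp only [hM1]
    push_cast
    exact cos_triple_attained hM
end
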